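/- arXiv:1909.09119 — 4 statements merged into one kernel-verified Lean document; each statement's English description precedes it below -/
import Mathlib

section
/- Let ρ be a d×d complex positive semidefinite matrix with trace 1 (a quantum state), let P₁,…,Pₙ be d×d Hermitian complex matrices, let a₁,…,aₙ be real coefficients, and let s₁,…,s_K be nonempty, pairwise disjoint subsets of {1,…,n} whose union is {1,…,n}, such that for each k the matrices {Pᵢ : i ∈ s_k} pairwise commute. For a matrix M write ⟨M⟩ = tr(ρM), and define the (real) covariance Cov(i,j) = Re tr(ρ·(Pᵢ − ⟨Pᵢ⟩·1)·(Pⱼ − ⟨Pⱼ⟩·1)). Then for every real S > 0, the squared standard error of the grouped estimator with sample allocation S_k = |s_k|·S is at most that of the ungrouped estimator: ∑_{k=1}^{K} (1/(|s_k|·S)) · ∑_{i∈s_k} ∑_{j∈s_k} aᵢ aⱼ Cov(i,j) ≤ (1/S) · ∑_{i=1}^{n} aᵢ² Cov(i,i). -/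
open Matrix Finset ComplexOrder

/-!
Positivity of `tr(ρ Z²)` for Hermitian `Z`, applied to `Z = aᵢQᵢ - aⱼQⱼ` with `Qᵢ = Pᵢ - ⟨Pᵢ⟩`,
gives `aᵢaⱼ Cov(i,j) + aⱼaᵢ Cov(j,i) ≤ aᵢ² Cov(i,i) + aⱼ² Cov(j,j)`. Summing this over all pairs
of a group `s` bounds the group's variance by `|s|` times the sum of the individual variances,
and the factor `|s|` is exactly what the allocation `S_k = |s_k| S` compensates.
-/
theorem Finset.sum_sum_le_card_mul_sum_diag {ι R : Type*} [Field R] [LinearOrder R]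
    [IsStrictOrderedRing R] (s : Finset ι) (C : ι → ι → R)
    (h : ∀ i ∈ s, ∀ j ∈ s, C i j + C j i ≤ C i i + C j j) :
    ∑ i ∈ s, ∑ j ∈ s, C i j ≤ #s * ∑ i ∈ s, C i i := by
  have hsum := sum_le_sum fun i hi => sum_le_sum fun j hj => h i hi j hj
  simp only [sum_add_distrib, sum_const, nsmul_eq_mul] at hsum
  rw [sum_comm (f := fun i j => C j i), ← mul_sum] at hsum
  linarith

theorem Finset.sum_sum_eq_sum_of_partition {ι κ M : Type*} [Fintype ι] [Fintype κ]
    [AddCommMonoid M] (s : κ → Finset ι) (hdisj : ∀ k l, k ≠ l → Disjoint (s k) (s l))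
    (hcover : ∀ i, ∃ k, i ∈ s k) (f : ι → M) :
    ∑ k, ∑ i ∈ s k, f i = ∑ i, f i := by
  classical
  have hunion : univ.biUnion s = univ :=
    eq_univ_of_forall fun i => mem_biUnion.mpr <| (hcover i).imp fun k hk => ⟨mem_univ k, hk⟩
  rw [← hunion, sum_biUnion fun k _ l _ hkl => hdisj k l hkl]

namespace Matrix

variable {d : Type*} [Fintype d] {ρ X Y : Matrix d d ℂ}

theorem IsHermitian.isSelfAdjoint_trace_mul (hX : X.IsHermitian) (hY : Y.IsHermitian) :
    IsSelfAdjoint (X * Y).trace := by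
  rw [IsSelfAdjoint, ← trace_conjTranspose, conjTranspose_mul, hX.eq, hY.eq, trace_mul_comm]

theorem IsHermitian.sub_trace_mul_smul_one [DecidableEq d] (hρ : ρ.IsHermitian)
    (hX : X.IsHermitian) :
    (X - (ρ * X).trace • (1 : Matrix d d ℂ)).IsHermitian :=
  hX.sub (isHermitian_one.smul (hρ.isSelfAdjoint_trace_mul hX))

theorem PosSemidef.re_trace_mul_mul_self_nonneg (hρ : ρ.PosSemidef) (hX : X.IsHermitian) :
    0 ≤ (ρ * (X * X)).trace.re := by
  have h : (ρ * (X * X)).trace = (X * ρ * Xᴴ).trace := by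
    rw [hX.eq, ← Matrix.mul_assoc, trace_mul_cycle]
  rw [h]
  exact Complex.nonneg_iff.mp (hρ.mul_mul_conjTranspose_same X).trace_nonneg |>.1

theorem PosSemidef.re_trace_mul_add_le (hρ : ρ.PosSemidef) (hX : X.IsHermitian)
    (hY : Y.IsHermitian) :
    (ρ * (X * Y)).trace.re + (ρ * (Y * X)).trace.re ≤
      (ρ * (X * X)).trace.re + (ρ * (Y * Y)).trace.re := by
  have h := hρ.re_trace_mul_mul_self_nonneg (hX.sub hY)
  simp only [sub_mul, mul_sub, trace_sub, Complex.sub_re] at h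
  linarith

theorem re_trace_mul_smul_mul_smul (b c : ℝ) :
    (ρ * ((b • X) * (c • Y))).trace.re = b * c * (ρ * (X * Y)).trace.re := by
  simp only [Matrix.smul_mul, Matrix.mul_smul, trace_smul, Complex.smul_re, smul_eq_mul]
  ring

end Matrix

theorem grouped_standard_error_le_general {d n K : ℕ}
    (ρ : Matrix (Fin d) (Fin d) ℂ) (hρ : ρ.PosSemidef)
    (P : Fin n → Matrix (Fin d) (Fin d) ℂ) (hP : ∀ i, (P i).IsHermitian)
    (a : Fin n → ℝ)
    (s : Fin K → Finset (Fin n))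
    (hdisj : ∀ k l, k ≠ l → Disjoint (s k) (s l))
    (hcover : ∀ i, ∃ k, i ∈ s k)
    (S : ℝ) (hS : 0 < S)
    (expval : Matrix (Fin d) (Fin d) ℂ → ℂ)
    (hexp : ∀ M, expval M = (ρ * M).trace)
    (Cov : Fin n → Fin n → ℝ)
    (hCov : ∀ i j, Cov i j =
      ((ρ * ((P i - expval (P i) • (1 : Matrix (Fin d) (Fin d) ℂ)) *
        (P j - expval (P j) • (1 : Matrix (Fin d) (Fin d) ℂ)))).trace).re) :
    ∑ k, (1 / (((s k).card : ℝ) * S)) * ∑ i ∈ s k, ∑ j ∈ s k, a i * a j * Cov i j ≤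
      (1 / S) * ∑ i, (a i) ^ 2 * Cov i i := by
  have hcentered : ∀ i, (P i - expval (P i) • (1 : Matrix (Fin d) (Fin d) ℂ)).IsHermitian :=
    fun i => hexp (P i) ▸ hρ.isHermitian.sub_trace_mul_smul_one (hP i)
  have hpair : ∀ i j, a i * a j * Cov i j + a j * a i * Cov j i ≤
      a i * a i * Cov i i + a j * a j * Cov j j := by
    intro i j
    have h := hρ.re_trace_mul_add_le ((hcentered i).smul (.all (a i)))
      ((hcentered j).smul (.all (a j)))
    simpa only [re_trace_mul_smul_mul_smul, ← hCov] using h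
  have hgroup : ∀ k, ∑ i ∈ s k, ∑ j ∈ s k, a i * a j * Cov i j ≤
      #(s k) * ∑ i ∈ s k, a i ^ 2 * Cov i i := fun k => by
    simpa only [sq] using
      (s k).sum_sum_le_card_mul_sum_diag (fun i j => a i * a j * Cov i j) fun i _ j _ => hpair i j
  calc ∑ k, (1 / (((s k).card : ℝ) * S)) * ∑ i ∈ s k, ∑ j ∈ s k, a i * a j * Cov i j
      ≤ ∑ k, (1 / S) * ∑ i ∈ s k, a i ^ 2 * Cov i i := by
        refine sum_le_sum fun k _ => ?_
        rcases (s k).eq_empty_or_nonempty with hempty | hnonempty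
        · simp [hempty]
        have hcard : (0 : ℝ) < #(s k) := by exact_mod_cast hnonempty.card_pos
        calc _ ≤ 1 / (#(s k) * S) * (#(s k) * ∑ i ∈ s k, a i ^ 2 * Cov i i) := by
              gcongr; exact hgroup k
          _ = _ := by field_simp
    _ = (1 / S) * ∑ i, a i ^ 2 * Cov i i := by
        rw [← mul_sum, sum_sum_eq_sum_of_partition s hdisj hcover]

/-- For a quantum state `ρ`, Hermitian observables `P i` with real coefficients `a i`,
and a partition of the index set into groups of pairwise commuting observables,
the squared standard error of the grouped estimator with sample allocation
`S_k = |s_k| * S` is at most that of the ungrouped estimator. -/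
theorem grouped_standard_error_le {d n K : ℕ}
    (ρ : Matrix (Fin d) (Fin d) ℂ) (hρ : ρ.PosSemidef) (hρtr : ρ.trace = 1)
    (P : Fin n → Matrix (Fin d) (Fin d) ℂ) (hP : ∀ i, (P i).IsHermitian)
    (a : Fin n → ℝ)
    (s : Fin K → Finset (Fin n))
    (hne : ∀ k, (s k).Nonempty)
    (hdisj : ∀ k l, k ≠ l → Disjoint (s k) (s l))
    (hcover : ∀ i, ∃ k, i ∈ s k)
    (hcomm : ∀ k, ∀ i ∈ s k, ∀ j ∈ s k, P i * P j = P j * P i)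
    (S : ℝ) (hS : 0 < S)
    (expval : Matrix (Fin d) (Fin d) ℂ → ℂ)
    (hexp : ∀ M, expval M = (ρ * M).trace)
    (Cov : Fin n → Fin n → ℝ)
    (hCov : ∀ i j, Cov i j =
      ((ρ * ((P i - expval (P i) • (1 : Matrix (Fin d) (Fin d) ℂ)) *
        (P j - expval (P j) • (1 : Matrix (Fin d) (Fin d) ℂ)))).trace).re) :
    ∑ k, (1 / (((s k).card : ℝ) * S)) * ∑ i ∈ s k, ∑ j ∈ s k, a i * a j * Cov i j ≤
      (1 / S) * ∑ i, (a i) ^ 2 * Cov i i :=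
  grouped_standard_error_le_general ρ hρ P hP a s hdisj hcover S hS expval hexp Cov hCov
end

section
/- Let (Ω, μ) be a probability space, let X₁,…,Xₙ : Ω → ℝ be square-integrable random variables (each MemLp with exponent 2), let a₁,…,aₙ be real numbers, and let s₁,…,s_K be nonempty, pairwise disjoint subsets of {1,…,n} whose union is {1,…,n}. Then for every real S > 0: ∑_{k=1}^{K} Var(∑_{i∈s_k} aᵢ·Xᵢ)/(|s_k|·S) ≤ (1/S)·∑_{i=1}^{n} Var(aᵢ·Xᵢ). In particular, when each group s_k receives a number of samples proportional to its size, S_k = |s_k|·S, the standard error of the grouped estimator is less than or equal to the standard error of the ungrouped estimator: ε_G ≤ ε_NG. -/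
/-!
Expanding the variance of a sum of `m` square-integrable variables into covariances and bounding
each `2 cov(Y i, Y j)` by `Var(Y i) + Var(Y j)` (the variance of `Y i - Y j` is nonnegative) gives
`Var(∑ Y i) ≤ m ∑ Var(Y i)`. Dividing by the group size `m = |s k|` and summing over the groups of
a partition yields the claim.
-/

open MeasureTheory ProbabilityTheory Finset Function

namespace ProbabilityTheory

variable {Ω : Type*} {mΩ : MeasurableSpace Ω} {μ : Measure Ω} [IsFiniteMeasure μ]

lemma two_mul_covariance_le_variance_add_variance {X Y : Ω → ℝ} (hX : MemLp X 2 μ)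
    (hY : MemLp Y 2 μ) : 2 * cov[X, Y; μ] ≤ Var[X; μ] + Var[Y; μ] := by
  have := variance_sub hX hY
  have := variance_nonneg (X - Y) μ
  linarith

lemma variance_fun_sum_le_card_mul_sum {ι : Type*} {t : Finset ι} {Y : ι → Ω → ℝ}
    (hY : ∀ i ∈ t, MemLp (Y i) 2 μ) :
    Var[fun ω ↦ ∑ i ∈ t, Y i ω; μ] ≤ #t * ∑ i ∈ t, Var[Y i; μ] := by
  rw [variance_fun_sum' hY]
  calc ∑ i ∈ t, ∑ j ∈ t, cov[Y i, Y j; μ]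
      ≤ ∑ i ∈ t, ∑ j ∈ t, (Var[Y i; μ] + Var[Y j; μ]) / 2 :=
        sum_le_sum fun i hi ↦ sum_le_sum fun j hj ↦ by
          linarith [two_mul_covariance_le_variance_add_variance (hY i hi) (hY j hj)]
    _ = #t * ∑ i ∈ t, Var[Y i; μ] := by
        simp only [add_div, sum_add_distrib, sum_const, nsmul_eq_mul, ← mul_sum, ← sum_div]
        ring

lemma variance_fun_sum_div_card_le {ι : Type*} {t : Finset ι} {Y : ι → Ω → ℝ}
    (hY : ∀ i ∈ t, MemLp (Y i) 2 μ) :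
    Var[fun ω ↦ ∑ i ∈ t, Y i ω; μ] / #t ≤ ∑ i ∈ t, Var[Y i; μ] :=
  div_le_of_le_mul₀ (Nat.cast_nonneg _) (sum_nonneg fun i _ ↦ variance_nonneg _ _)
    (by rw [mul_comm]; exact variance_fun_sum_le_card_mul_sum hY)

end ProbabilityTheory

lemma Finset.sum_sum_eq_sum_of_pairwise_disjoint_of_cover {ι κ M : Type*} [Fintype ι] [Fintype κ]
    [AddCommMonoid M] {s : κ → Finset ι} (hdisj : Pairwise (Disjoint on s))
    (hcover : ∀ i, ∃ k, i ∈ s k) (f : ι → M) : ∑ k, ∑ i ∈ s k, f i = ∑ i, f i := by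
  classical
  rw [← sum_biUnion fun k _ l _ hkl ↦ hdisj hkl]
  congr
  exact eq_univ_iff_forall.2 fun i ↦ (hcover i).elim fun k hk ↦ mem_biUnion.2 ⟨k, mem_univ k, hk⟩

theorem grouped_variance_error_le_general {Ω : Type*} [MeasurableSpace Ω]
    (μ : Measure Ω) [IsProbabilityMeasure μ]
    {n K : ℕ} (X : Fin n → Ω → ℝ) (hX : ∀ i, MemLp (X i) 2 μ)
    (a : Fin n → ℝ)
    (s : Fin K → Finset (Fin n))
    (hdisj : ∀ k l, k ≠ l → Disjoint (s k) (s l))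
    (hcover : ∀ i, ∃ k, i ∈ s k)
    (S : ℝ) (hS : 0 < S) :
    ∑ k, variance (fun ω => ∑ i ∈ s k, a i * X i ω) μ / (((s k).card : ℝ) * S) ≤
      (1 / S) * ∑ i, variance (fun ω => a i * X i ω) μ := by
  have hgroup (k : Fin K) :
      variance (fun ω => ∑ i ∈ s k, a i * X i ω) μ / (((s k).card : ℝ) * S) ≤
        (1 / S) * ∑ i ∈ s k, variance (fun ω => a i * X i ω) μ := by
    rw [← div_div, one_div_mul_eq_div]
    exact div_le_div_of_nonneg_right
      (variance_fun_sum_div_card_le fun i _ ↦ (hX i).const_mul (a i)) hS.le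
  calc _ ≤ ∑ k, (1 / S) * ∑ i ∈ s k, variance (fun ω => a i * X i ω) μ :=
        sum_le_sum fun k _ ↦ hgroup k
    _ = _ := by
        rw [← mul_sum, sum_sum_eq_sum_of_pairwise_disjoint_of_cover
          (fun k l hkl ↦ hdisj k l hkl) hcover]

/-- If each group `s k` receives `|s k| * S` samples, the squared standard error of the
grouped estimator is at most that of the ungrouped estimator using `S` samples per variable. -/
theorem grouped_variance_error_le {Ω : Type*} [MeasurableSpace Ω]
    (μ : Measure Ω) [IsProbabilityMeasure μ]
    {n K : ℕ} (X : Fin n → Ω → ℝ) (hX : ∀ i, MemLp (X i) 2 μ)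
    (a : Fin n → ℝ)
    (s : Fin K → Finset (Fin n))
    (hne : ∀ k, (s k).Nonempty)
    (hdisj : ∀ k l, k ≠ l → Disjoint (s k) (s l))
    (hcover : ∀ i, ∃ k, i ∈ s k)
    (S : ℝ) (hS : 0 < S) :
    ∑ k, variance (fun ω => ∑ i ∈ s k, a i * X i ω) μ / (((s k).card : ℝ) * S) ≤
      (1 / S) * ∑ i, variance (fun ω => a i * X i ω) μ :=
  grouped_variance_error_le_general μ X hX a s hdisj hcover S hS
end

section
/- Let N be a positive natural number and let p, q : Fin N → Matrix (Fin 2) (Fin 2) ℂ be two Pauli strings, i.e., for every i, p i and q i each belong to {I₂, σx, σy, σz}. Define the N-qubit matrices P, Q indexed by (Fin N → Fin 2) entrywise by P x y = ∏_{i} (p i) (x i) (y i) and Q x y = ∏_{i} (q i) (x i) (y i) (the N-fold tensor/Kronecker product). Then P and Q commute (P·Q = Q·P) if and only if the number of positions i at which p i and q i do not commute — equivalently, the number of positions where p i and q i are two distinct non-identity Pauli matrices — is even. -/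
open Matrix Complex Finset

noncomputable section

def σx : Matrix (Fin 2) (Fin 2) ℂ := !![0, 1; 1, 0]
def σy : Matrix (Fin 2) (Fin 2) ℂ := !![0, -I; I, 0]
def σz : Matrix (Fin 2) (Fin 2) ℂ := !![1, 0; 0, -1]

lemma pauli_anticomm' {A B : Matrix (Fin 2) (Fin 2) ℂ}
    (hA : A ∈ ({1, σx, σy, σz} : Set (Matrix (Fin 2) (Fin 2) ℂ)))
    (hB : B ∈ ({1, σx, σy, σz} : Set (Matrix (Fin 2) (Fin 2) ℂ)))
    (h : A * B ≠ B * A) : B * A = -(A * B) := by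
  simp only [Set.mem_insert_iff, Set.mem_singleton_iff] at hA hB
  rcases hA with rfl|rfl|rfl|rfl <;> rcases hB with rfl|rfl|rfl|rfl <;>
    first
      | (exact absurd rfl h)
      | (exact absurd (by simp) h)
      | (ext i j; fin_cases i <;> fin_cases j <;>
          simp [σx, σy, σz, Matrix.mul_apply, Fin.sum_univ_two] <;> ring)

lemma pauli_det_ne' {A : Matrix (Fin 2) (Fin 2) ℂ}
    (hA : A ∈ ({1, σx, σy, σz} : Set (Matrix (Fin 2) (Fin 2) ℂ))) : A.det ≠ 0 := by
  simp only [Set.mem_insert_iff, Set.mem_singleton_iff] at hA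
  rcases hA with rfl|rfl|rfl|rfl <;>
    simp [σx, σy, σz, Matrix.det_fin_two_of, Complex.I_mul_I] <;>
    norm_num [Complex.I_ne_zero]

lemma row_ne_zero' {n : ℕ} {M : Matrix (Fin n) (Fin n) ℂ} (h : IsUnit M.det) (a : Fin n) :
    ∃ b, M a b ≠ 0 := by
  by_contra h0
  push_neg at h0
  have h1 : M * M⁻¹ = 1 := Matrix.mul_nonsing_inv M h
  have h2 := congrFun (congrFun h1 a) a
  simp [Matrix.mul_apply, h0, Matrix.one_apply] at h2

/-- Two `N`-qubit Pauli strings commute if and only if the number of positions at which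
their single-qubit Pauli factors fail to commute is even. -/
theorem pauli_strings_commute_iff_even {N : ℕ} (hN : 0 < N)
    (p q : Fin N → Matrix (Fin 2) (Fin 2) ℂ)
    (hp : ∀ i, p i ∈ ({1, σx, σy, σz} : Set (Matrix (Fin 2) (Fin 2) ℂ)))
    (hq : ∀ i, q i ∈ ({1, σx, σy, σz} : Set (Matrix (Fin 2) (Fin 2) ℂ)))
    (P Q : Matrix (Fin N → Fin 2) (Fin N → Fin 2) ℂ)
    (hP : ∀ x y, P x y = ∏ i, p i (x i) (y i))
    (hQ : ∀ x y, Q x y = ∏ i, q i (x i) (y i)) :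
    P * Q = Q * P ↔
      Even (Finset.univ.filter fun i => p i * q i ≠ q i * p i).card := by
  set S : Finset (Fin N) := Finset.univ.filter fun i => p i * q i ≠ q i * p i with hS
  -- entrywise formulas for the products
  have hPQ : ∀ x y : Fin N → Fin 2, (P * Q) x y = ∏ i, (p i * q i) (x i) (y i) := by
    intro x y
    have : (P * Q) x y = ∑ z : Fin N → Fin 2, ∏ i, (p i (x i) (z i) * q i (z i) (y i)) := by
      simp only [Matrix.mul_apply, hP, hQ, ← Finset.prod_mul_distrib]
    rw [this]
    simp only [Matrix.mul_apply]
    rw [Finset.prod_univ_sum]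
    rw [← Fintype.piFinset_univ]
  have hQP : ∀ x y : Fin N → Fin 2, (Q * P) x y = ∏ i, (q i * p i) (x i) (y i) := by
    intro x y
    have : (Q * P) x y = ∑ z : Fin N → Fin 2, ∏ i, (q i (x i) (z i) * p i (z i) (y i)) := by
      simp only [Matrix.mul_apply, hP, hQ, ← Finset.prod_mul_distrib]
    rw [this]
    simp only [Matrix.mul_apply]
    rw [Finset.prod_univ_sum]
    rw [← Fintype.piFinset_univ]
  -- sign relation
  have key : ∀ x y : Fin N → Fin 2,
      (Q * P) x y = (-1 : ℂ) ^ S.card * (P * Q) x y := by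
    intro x y
    rw [hPQ, hQP]
    rw [← Finset.prod_filter_mul_prod_filter_not Finset.univ
        (fun i => p i * q i ≠ q i * p i) (fun i => (q i * p i) (x i) (y i))]
    rw [← Finset.prod_filter_mul_prod_filter_not Finset.univ
        (fun i => p i * q i ≠ q i * p i) (fun i => (p i * q i) (x i) (y i))]
    have h1 : ∏ i ∈ S, (q i * p i) (x i) (y i)
        = (-1 : ℂ) ^ S.card * ∏ i ∈ S, (p i * q i) (x i) (y i) := by
      have : ∀ i ∈ S, (q i * p i) (x i) (y i) = (-1 : ℂ) * (p i * q i) (x i) (y i) := by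
        intro i hi
        rw [hS, Finset.mem_filter] at hi
        rw [pauli_anticomm' (hp i) (hq i) hi.2]
        simp
      rw [Finset.prod_congr rfl this, Finset.prod_mul_distrib, Finset.prod_const]
    have h2 : ∏ i ∈ Finset.univ.filter (fun i => ¬ (p i * q i ≠ q i * p i)),
          (q i * p i) (x i) (y i)
        = ∏ i ∈ Finset.univ.filter (fun i => ¬ (p i * q i ≠ q i * p i)),
          (p i * q i) (x i) (y i) := by
      apply Finset.prod_congr rfl
      intro i hi
      rw [Finset.mem_filter] at hi
      push_neg at hi
      rw [hi.2]
    rw [show Finset.univ.filter (fun i => p i * q i ≠ q i * p i) = S from rfl] at *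
    rw [h1, h2]
    ring
  constructor
  · -- if they commute, the count is even
    intro hcomm
    by_contra hodd
    rw [Nat.not_even_iff_odd] at hodd
    -- find a nonzero entry of P * Q
    have hunit : ∀ i, IsUnit (p i * q i).det := by
      intro i
      rw [Matrix.det_mul]
      exact (mul_ne_zero (pauli_det_ne' (hp i)) (pauli_det_ne' (hq i))).isUnit
    set x : Fin N → Fin 2 := fun _ => 0 with hx
    have hy : ∀ i, ∃ b, (p i * q i) (x i) b ≠ 0 := fun i => row_ne_zero' (hunit i) (x i)
    choose y hy' using hy
    have hne : (P * Q) x y ≠ 0 := by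
      rw [hPQ]
      exact Finset.prod_ne_zero_iff.mpr fun i _ => hy' i
    have := key x y
    rw [← hcomm, hodd.neg_one_pow] at this
    have : (P * Q) x y = 0 := by linear_combination (this) / 2
    exact hne this
  · -- if the count is even, they commute
    intro heven
    ext x y
    rw [key x y, heven.neg_one_pow, one_mul]
end
end

section
/- There do not exist 2×2 complex unitary matrices U and V such that the three conjugated matrices (U ⊗ₖ V)·(σx ⊗ₖ σx)·(U ⊗ₖ V)⁻¹, (U ⊗ₖ V)·(σy ⊗ₖ σy)·(U ⊗ₖ V)⁻¹, and (U ⊗ₖ V)·(σz ⊗ₖ σz)·(U ⊗ₖ V)⁻¹ are all diagonal. That is, σx⊗σx, σy⊗σy, and σz⊗σz cannot be simultaneously diagonalized by any tensor product basis, so they are not jointly measurable by tensor-product-basis (TPB) measurements. -/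
open Matrix Kronecker Complex

noncomputable section

/-- Standard basis vector `e x y` of the two-qubit space `(Fin 2 × Fin 2) → ℂ`. -/
def e (x y : Fin 2) : (Fin 2 × Fin 2) → ℂ := fun p => if p = (x, y) then 1 else 0

/-- The rank-one projector `|v⟩⟨v|`. -/
def proj (v : (Fin 2 × Fin 2) → ℂ) : Matrix (Fin 2 × Fin 2) (Fin 2 × Fin 2) ℂ :=
  vecMulVec v (star v)

lemma diag_left {A B : Matrix (Fin 2) (Fin 2) ℂ} (h : (A ⊗ₖ B).IsDiag)
    (hB : B ≠ 0) : A.IsDiag := by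
  obtain ⟨k, l, hkl⟩ : ∃ k l, B k l ≠ 0 := by
    by_contra hc
    push_neg at hc
    exact hB (by ext k l; simp [hc])
  intro i j hij
  have h2 := h (i := (i, k)) (j := (j, l)) (by simp [Prod.ext_iff, hij])
  simp only [kroneckerMap_apply] at h2
  exact (mul_eq_zero.1 h2).resolve_right hkl

lemma sx_mul_sx : σx * σx = 1 := by
  ext i j; fin_cases i <;> fin_cases j <;>
    simp [σx, Matrix.mul_apply, Fin.sum_univ_two]

lemma sy_mul_sy : σy * σy = 1 := by
  ext i j; fin_cases i <;> fin_cases j <;>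
    simp [σy, Matrix.mul_apply, Fin.sum_univ_two]

lemma anticomm : σx * σy + σy * σx = 0 := by
  ext i j; fin_cases i <;> fin_cases j <;>
    simp [σx, σy, Matrix.mul_apply, Fin.sum_univ_two]

lemma conjmul (W A B : Matrix (Fin 2) (Fin 2) ℂ) (h : W⁻¹ * W = 1) :
    (W * A * W⁻¹) * (W * B * W⁻¹) = W * (A * B) * W⁻¹ := by
  simp only [Matrix.mul_assoc]
  rw [← Matrix.mul_assoc W⁻¹ W, h, Matrix.one_mul]

/-- `σx⊗σx`, `σy⊗σy` and `σz⊗σz` cannot be simultaneously diagonalized by any tensor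
product of single-qubit unitaries, i.e. they are not jointly measurable by TPB. -/
theorem no_TPB_joint_measurement :
    ¬ ∃ (U V : Matrix (Fin 2) (Fin 2) ℂ),
      U ∈ Matrix.unitaryGroup (Fin 2) ℂ ∧ V ∈ Matrix.unitaryGroup (Fin 2) ℂ ∧
      ((U ⊗ₖ V) * (σx ⊗ₖ σx) * (U ⊗ₖ V)⁻¹).IsDiag ∧
      ((U ⊗ₖ V) * (σy ⊗ₖ σy) * (U ⊗ₖ V)⁻¹).IsDiag ∧
      ((U ⊗ₖ V) * (σz ⊗ₖ σz) * (U ⊗ₖ V)⁻¹).IsDiag := by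
  rintro ⟨U, V, hU, hV, hx, hy, -⟩
  rw [Matrix.mem_unitaryGroup_iff'] at hU hV
  have hUinv : U⁻¹ = star U := inv_eq_left_inv hU
  have hVinv : V⁻¹ = star V := inv_eq_left_inv hV
  have hUl : U⁻¹ * U = 1 := by rw [hUinv]; exact hU
  have hVl : V⁻¹ * V = 1 := by rw [hVinv]; exact hV
  have hUr : U * U⁻¹ = 1 := by rw [hUinv, mul_eq_one_comm]; exact hU
  have hVr : V * V⁻¹ = 1 := by rw [hVinv, mul_eq_one_comm]; exact hV
  have key : ∀ σ : Matrix (Fin 2) (Fin 2) ℂ,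
      (U ⊗ₖ V) * (σ ⊗ₖ σ) * (U ⊗ₖ V)⁻¹ = (U * σ * U⁻¹) ⊗ₖ (V * σ * V⁻¹) := by
    intro σ
    rw [Matrix.inv_kronecker, Matrix.mul_kronecker_mul, Matrix.mul_kronecker_mul]
  rw [key] at hx hy
  have hnz : ∀ σ : Matrix (Fin 2) (Fin 2) ℂ, σ * σ = 1 → V * σ * V⁻¹ ≠ 0 := by
    intro σ hσ h0
    have h1 : (V * σ * V⁻¹) * (V * σ * V⁻¹) = 1 := by
      rw [conjmul V σ σ hVl, hσ, Matrix.mul_one, hVr]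
    rw [h0, Matrix.zero_mul] at h1
    exact zero_ne_one h1
  set A := U * σx * U⁻¹ with hAdef
  set B := U * σy * U⁻¹ with hBdef
  have dA : A.IsDiag := diag_left hx (hnz σx sx_mul_sx)
  have dB : B.IsDiag := diag_left hy (hnz σy sy_mul_sy)
  have hA2 : A * A = 1 := by rw [hAdef, conjmul U σx σx hUl, sx_mul_sx, Matrix.mul_one, hUr]
  have hB2 : B * B = 1 := by rw [hBdef, conjmul U σy σy hUl, sy_mul_sy, Matrix.mul_one, hUr]
  have hAB : A * B + B * A = 0 := by
    rw [hAdef, hBdef, conjmul U σx σy hUl, conjmul U σy σx hUl, ← Matrix.add_mul,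
      ← Matrix.mul_add, anticomm, Matrix.mul_zero, Matrix.zero_mul]
  have hA01 : A 0 1 = 0 := dA (by decide)
  have hA10 : A 1 0 = 0 := dA (by decide)
  have hB01 : B 0 1 = 0 := dB (by decide)
  have hB10 : B 1 0 = 0 := dB (by decide)
  have eA : A 0 0 * A 0 0 = 1 := by
    have := congrArg (fun M : Matrix (Fin 2) (Fin 2) ℂ => M 0 0) hA2
    simpa [Matrix.mul_apply, Fin.sum_univ_two, hA01, hA10] using this
  have eB : B 0 0 * B 0 0 = 1 := by
    have := congrArg (fun M : Matrix (Fin 2) (Fin 2) ℂ => M 0 0) hB2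
    simpa [Matrix.mul_apply, Fin.sum_univ_two, hB01, hB10] using this
  have eAB : A 0 0 * B 0 0 + B 0 0 * A 0 0 = 0 := by
    have := congrArg (fun M : Matrix (Fin 2) (Fin 2) ℂ => M 0 0) hAB
    simpa [Matrix.mul_apply, Fin.sum_univ_two, hA01, hA10, hB01, hB10] using this
  have hA0 : A 0 0 ≠ 0 := fun h => by simp [h] at eA
  have hB0 : B 0 0 ≠ 0 := fun h => by simp [h] at eB
  have : A 0 0 * B 0 0 = 0 := by
    have h2 : (2 : ℂ) * (A 0 0 * B 0 0) = 0 := by ring_nf; ring_nf at eAB; linear_combination eAB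
    simpa [mul_eq_zero] using h2
  exact (mul_ne_zero hA0 hB0) this
end
end
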